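/- Let L be a function algebra on a set I that is countably generated (L is the smallest subalgebra of itself containing some countable subset). Then every locally partitionable congruence on L is partitionable. -/
import Mathlib


open scoped Uniformity

/-- `L` is a function algebra on `I` with value type `A`. -/
def IsFnAlg {A I : Type*} (L : Set (I → A)) : Prop :=
  (∀ a : A, (fun _ : I => a) ∈ L) ∧
    ∀ (n : ℕ) (f : (Fin n → A) → A) (g : Fin n → I → A),
      (∀ i, g i ∈ L) → (fun x : I => f fun i => g i x) ∈ L

/-- A homomorphism from the function algebra `L` to `A`. -/
def IsHom {A I : Type*} (L : Set (I → A)) (φ : L → A) : Prop :=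
  (∀ (a : A) (h : (fun _ : I => a) ∈ L), φ ⟨fun _ => a, h⟩ = a) ∧
    ∀ (n : ℕ) (f : (Fin n → A) → A) (g : Fin n → I → A) (hg : ∀ i, g i ∈ L)
      (h : (fun x : I => f fun i => g i x) ∈ L),
      φ ⟨fun x => f fun i => g i x, h⟩ = f fun i => φ ⟨g i, hg i⟩

/-- `Z(L)`: the set of all homomorphisms from `L` to `A`, as a subtype of `A^L`. -/
abbrev Zt {A I : Type*} (L : Set (I → A)) : Type _ := {φ : L → A // IsHom L φ}

/-- `B_A(X)`: the function algebra of all uniformly continuous maps `X → A`. -/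
def BA (A X : Type*) [UniformSpace A] [UniformSpace X] : Set (X → A) :=
  {f : X → A | UniformContinuous f}

/-- A homomorphism between function algebras. -/
def IsAlgHom {A I J : Type*} (L : Set (I → A)) (M : Set (J → A)) (Φ : L → M) : Prop :=
  (∀ (a : A) (h : (fun _ : I => a) ∈ L), ((Φ ⟨fun _ => a, h⟩ : M) : J → A) = fun _ => a) ∧
    ∀ (n : ℕ) (f : (Fin n → A) → A) (g : Fin n → I → A) (hg : ∀ i, g i ∈ L)
      (h : (fun x : I => f fun i => g i x) ∈ L),
      ((Φ ⟨fun x => f fun i => g i x, h⟩ : M) : J → A) =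
        fun y => f fun i => (Φ ⟨g i, hg i⟩ : J → A) y

/-- The kernel of a map `φ : L → A`. -/
def kerOf {A I : Type*} {L : Set (I → A)} (φ : L → A) : Set (L × L) :=
  {p | φ p.1 = φ p.2}

/-- The subalgebra generated by a set `S` of functions. -/
def genBy {A I : Type*} (S : Set (I → A)) : Set (I → A) :=
  ⋂₀ {M : Set (I → A) | IsFnAlg M ∧ S ⊆ M}

/-- A congruence on the function algebra `L`. -/
def IsCongruence {A I : Type*} (L : Set (I → A)) (θ : Set (L × L)) : Prop :=
  Equivalence (fun g h : L => (g, h) ∈ θ) ∧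
    ∀ (n : ℕ) (f : (Fin n → A) → A) (g h : Fin n → L),
      (∀ i, (g i, h i) ∈ θ) →
      ∀ (hg : (fun x : I => f fun i => (g i : I → A) x) ∈ L)
        (hh : (fun x : I => f fun i => (h i : I → A) x) ∈ L),
        ((⟨fun x => f fun i => (g i : I → A) x, hg⟩ : L),
          (⟨fun x => f fun i => (h i : I → A) x, hh⟩ : L)) ∈ θ

/-- The restriction `θ ∩ (N × N)` of a congruence to a subalgebra `N ⊆ L`. -/
def restrictCong {A I : Type*} {L N : Set (I → A)} (hNL : N ⊆ L) (θ : Set (L × L)) :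
    Set (N × N) :=
  {p | ((⟨p.1.1, hNL p.1.2⟩ : L), (⟨p.2.1, hNL p.2.2⟩ : L)) ∈ θ}

/-- A partitionable congruence: an intersection of kernels of homomorphisms into `A`. -/
def IsPartCong {A I : Type*} (L : Set (I → A)) (θ : Set (L × L)) : Prop :=
  IsCongruence L θ ∧ ∃ R : Set (Zt L), θ = ⋂ φ ∈ R, kerOf (φ : Zt L).1

/-- A locally partitionable congruence: its restriction to every finitely generated
subalgebra is partitionable. -/
def IsLocPartCong {A I : Type*} (L : Set (I → A)) (θ : Set (L × L)) : Prop :=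
  IsCongruence L θ ∧
    ∀ (N : Set (I → A)) (hNL : N ⊆ L), (∃ S : Set (I → A), S.Finite ∧ N = genBy S) →
      IsPartCong N (restrictCong hNL θ)

section Aux

variable {A I : Type*}

theorem isFnAlg_genBy (S : Set (I → A)) : IsFnAlg (genBy S) := by
  constructor
  · intro a
    intro M hM
    exact hM.1.1 a
  · intro n f g hg M hM
    exact hM.1.2 n f g (fun i => hg i M hM)

theorem subset_genBy (S : Set (I → A)) : S ⊆ genBy S := by
  intro p hp M hM
  exact hM.2 hp

theorem genBy_subset {S M : Set (I → A)} (hM : IsFnAlg M) (hSM : S ⊆ M) : genBy S ⊆ M :=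
  fun _ hp => hp M ⟨hM, hSM⟩

/-- The subalgebra generated by `u 0, …, u (k-1)`. -/
def Mk (u : ℕ → I → A) (k : ℕ) : Set (I → A) :=
  {p | ∃ f : (Fin k → A) → A, p = fun x => f (fun j : Fin k => u j x)}

theorem isFnAlg_Mk (u : ℕ → I → A) (k : ℕ) : IsFnAlg (Mk u k) := by
  constructor
  · intro a
    exact ⟨fun _ => a, rfl⟩
  · intro n f g hg
    choose F hF using hg
    refine ⟨fun w => f (fun i => F i w), ?_⟩
    funext x
    simp only
    congr 1
    funext i
    exact congrFun (hF i) x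

theorem Mk_mono (u : ℕ → I → A) {k m : ℕ} (hkm : k ≤ m) : Mk u k ⊆ Mk u m := by
  rintro p ⟨f, hf⟩
  refine ⟨fun w => f (fun j => w (Fin.castLE hkm j)), ?_⟩
  rw [hf]
  funext x
  simp only [Fin.coe_castLE]

theorem mem_Mk_of_lt (u : ℕ → I → A) {j k : ℕ} (hjk : j < k) : u j ∈ Mk u k :=
  ⟨fun w => w ⟨j, hjk⟩, rfl⟩

theorem Mk_eq_genBy (u : ℕ → I → A) (k : ℕ) : Mk u k = genBy (u '' Set.Iio k) := by
  apply subset_antisymm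
  · rintro p ⟨f, hf⟩ M hM
    have := hM.1.2 k f (fun j : Fin k => u j) (fun j => hM.2 ⟨j, j.isLt, rfl⟩)
    rwa [hf]
  · refine genBy_subset (isFnAlg_Mk u k) ?_
    rintro p ⟨j, hj, rfl⟩
    exact mem_Mk_of_lt u hj

theorem genBy_range_eq (u : ℕ → I → A) : genBy (Set.range u) = ⋃ k, Mk u k := by
  apply subset_antisymm
  · refine genBy_subset ?_ ?_
    · constructor
      · intro a
        exact Set.mem_iUnion.mpr ⟨0, fun _ => a, rfl⟩
      · intro n f g hg
        have : ∀ i, ∃ k, g i ∈ Mk u k := fun i => Set.mem_iUnion.mp (hg i)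
        choose K hK using this
        set m := Finset.univ.sup K with hm
        have hKm : ∀ i, g i ∈ Mk u m := fun i => Mk_mono u (Finset.le_sup (Finset.mem_univ i)) (hK i)
        exact Set.mem_iUnion.mpr ⟨m, (isFnAlg_Mk u m).2 n f g hKm⟩
    · rintro p ⟨j, rfl⟩
      exact Set.mem_iUnion.mpr ⟨j + 1, mem_Mk_of_lt u (Nat.lt_succ_self j)⟩
  · refine Set.iUnion_subset fun k => ?_
    rintro p ⟨f, hf⟩
    rw [hf]
    exact (isFnAlg_genBy (Set.range u)).2 k f (fun j : Fin k => u j) (fun j => subset_genBy _ ⟨j, rfl⟩)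

end Aux
section Aux2

variable {A I : Type*}

/-- Every homomorphism on a finitely generated function algebra is an evaluation. -/
theorem hom_eval [Infinite A] (u : ℕ → I → A) (k : ℕ) (φ : Zt (Mk u k)) :
    ∃ x : I, ∀ (p : I → A) (hp : p ∈ Mk u k), φ.1 ⟨p, hp⟩ = p x := by
  classical
  have humem : ∀ j : Fin k, u j ∈ Mk u k := fun j => mem_Mk_of_lt u j.isLt
  have hex : ∃ x : I, ∀ j : Fin k, u j x = φ.1 ⟨u j, humem j⟩ := by
    by_contra hnex
    obtain ⟨c₁, c₂, hcc⟩ := Nontrivial.exists_pair_ne (α := A)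
    set f : (Fin k → A) → A :=
      fun w => if ∃ x : I, ∀ j : Fin k, u j x = w j then c₁ else c₂ with hf
    have h1 : (fun x : I => f (fun j : Fin k => u j x)) = fun _ : I => c₁ := by
      funext x
      exact if_pos ⟨x, fun j => rfl⟩
    have hmem1 : (fun x : I => f fun j : Fin k => u j x) ∈ Mk u k := ⟨f, rfl⟩
    have hmem2 : (fun _ : I => c₁) ∈ Mk u k := ⟨fun _ => c₁, rfl⟩
    have e2 := φ.2.1 c₁ hmem2
    have e1 := φ.2.2 k f (fun j : Fin k => u j) humem hmem1
    have e3 : (⟨fun x : I => f fun j : Fin k => u j x, hmem1⟩ : Mk u k) = ⟨fun _ : I => c₁, hmem2⟩ :=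
      Subtype.ext h1
    rw [e3, e2] at e1
    have e4 : f (fun j : Fin k => φ.1 ⟨u j, humem j⟩) = c₂ := by
      refine if_neg ?_
      intro hc
      exact hnex hc
    exact hcc (e1.trans e4)
  obtain ⟨x, hx⟩ := hex
  refine ⟨x, ?_⟩
  intro p hp
  obtain ⟨fp, hfp⟩ := id hp
  have hmemp : (fun y : I => fp fun j : Fin k => u j y) ∈ Mk u k := ⟨fp, rfl⟩
  have e0 : (⟨p, hp⟩ : Mk u k) = ⟨fun y : I => fp fun j : Fin k => u j y, hmemp⟩ :=
    Subtype.ext hfp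
  rw [e0, φ.2.2 k fp (fun j : Fin k => u j) humem hmemp, hfp]
  congr 1
  funext j
  exact (hx j).symm

open Classical in
/-- `g` patched with `h` off the set where `E_k = v`. -/
noncomputable def gpatch (u : ℕ → I → A) (g h : I → A) (k : ℕ) (v : Fin k → A) : I → A :=
  fun x => if ∀ j : Fin k, u j x = v j then g x else h x

theorem gpatch_zero (u : ℕ → I → A) (g h : I → A) (v : Fin 0 → A) :
    gpatch u g h 0 v = g := by
  funext x
  exact if_pos (fun j => j.elim0)

theorem gpatch_pos (u : ℕ → I → A) (g h : I → A) {k : ℕ} {v : Fin k → A} {x : I}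
    (hc : ∀ j : Fin k, u j x = v j) : gpatch u g h k v x = g x := if_pos hc

theorem gpatch_neg (u : ℕ → I → A) (g h : I → A) {k : ℕ} {v : Fin k → A} {x : I}
    (hc : ¬ ∀ j : Fin k, u j x = v j) : gpatch u g h k v x = h x := if_neg hc

theorem gpatch_mem (u : ℕ → I → A) (g h : I → A) {k m : ℕ} (v : Fin k → A)
    (hkm : k ≤ m) (hg : g ∈ Mk u m) (hh : h ∈ Mk u m) :
    gpatch u g h k v ∈ Mk u m := by
  classical
  obtain ⟨fg, hfg⟩ := hg
  obtain ⟨fh, hfh⟩ := hh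
  refine ⟨fun w => if ∀ j : Fin k, w (Fin.castLE hkm j) = v j then fg w else fh w, ?_⟩
  funext x
  show (if ∀ j : Fin k, u j x = v j then g x else h x) = _
  simp only
  rw [hfg, hfh]
  refine if_congr ?_ rfl rfl
  constructor
  · intro hc j
    simpa [Fin.coe_castLE] using hc j
  · intro hc j
    simpa [Fin.coe_castLE] using hc j

theorem gpatch_snoc_eq (u : ℕ → I → A) (g h : I → A) (k : ℕ) (v : Fin k → A) (x : I) :
    gpatch u g h (k + 1) (Fin.snoc v (u k x)) x = gpatch u g h k v x := by
  classical
  unfold gpatch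
  refine if_congr ?_ rfl rfl
  constructor
  · intro hc j
    have := hc j.castSucc
    rwa [Fin.snoc_castSucc, Fin.coe_castSucc] at this
  · intro hc j
    refine Fin.lastCases ?_ ?_ j
    · rw [Fin.snoc_last, Fin.val_last]
    · intro i
      rw [Fin.snoc_castSucc, Fin.coe_castSucc]
      exact hc i

end Aux2
theorem key_sep {A I : Type*} [Infinite A] (u : ℕ → I → A) (L : Set (I → A))
    (hLu : L = genBy (Set.range u)) (θ : Set (L × L)) (hθ : IsLocPartCong L θ)
    (g h : L) (hgh : (g, h) ∉ θ) :
    ∃ φ : Zt L, θ ⊆ kerOf φ.1 ∧ φ.1 g ≠ φ.1 h := by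
  classical
  have hMkL : ∀ k, Mk u k ⊆ L := fun k => by
    rw [hLu, genBy_range_eq]
    exact Set.subset_iUnion (fun k => Mk u k) k
  have hrep : ∀ p : L, ∃ k, ∃ f : (Fin k → A) → A,
      p.1 = fun x => f (fun j : Fin k => u j x) := by
    intro p
    have hp : p.1 ∈ ⋃ k, Mk u k := by
      rw [← genBy_range_eq, ← hLu]; exact p.2
    obtain ⟨k, hk⟩ := Set.mem_iUnion.mp hp
    exact ⟨k, hk⟩
  choose kp fp hfp using hrep
  set k₀ := max (kp g) (kp h) with hk₀
  have hgm : ∀ m, k₀ ≤ m → g.1 ∈ Mk u m := fun m hm =>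
    Mk_mono u (le_trans (le_max_left _ _) hm) ⟨fp g, hfp g⟩
  have hhm : ∀ m, k₀ ≤ m → h.1 ∈ Mk u m := fun m hm =>
    Mk_mono u (le_trans (le_max_right _ _) hm) ⟨fp h, hfp h⟩
  have hmemL : ∀ (k : ℕ) (v : Fin k → A), gpatch u g.1 h.1 k v ∈ L := fun k v =>
    hMkL (max k k₀) (gpatch_mem u g.1 h.1 v (le_max_left _ _)
      (hgm _ (le_max_right _ _)) (hhm _ (le_max_right _ _)))
  -- base of the recursion
  have base : ((⟨gpatch u g.1 h.1 0 (fun j : Fin 0 => j.elim0), hmemL 0 (fun j : Fin 0 => j.elim0)⟩ : L), h) ∉ θ := by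
    have e : (⟨gpatch u g.1 h.1 0 (fun j : Fin 0 => j.elim0), hmemL 0 (fun j : Fin 0 => j.elim0)⟩ : L) = g :=
      Subtype.ext (gpatch_zero u g.1 h.1 (fun j : Fin 0 => j.elim0))
    rw [e]
    exact hgh
  -- recursion step
  have step : ∀ (k : ℕ) (v : Fin k → A),
      ((⟨gpatch u g.1 h.1 k v, hmemL k v⟩ : L), h) ∉ θ →
      ∃ a : A, ((⟨gpatch u g.1 h.1 (k + 1) (Fin.snoc v a), hmemL (k + 1) (Fin.snoc v a)⟩ : L), h) ∉ θ := by
    intro k v hP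
    by_contra hcon
    push_neg at hcon
    apply hP
    set m := max (k + 1) k₀ with hm
    have hNL : Mk u m ⊆ L := hMkL m
    obtain ⟨-, R', hR'⟩ := hθ.2 (Mk u m) hNL
      ⟨u '' Set.Iio m, (Set.finite_Iio m).image u, Mk_eq_genBy u m⟩
    have hkm : k ≤ m := le_trans (Nat.le_succ k) (le_max_left _ _)
    have hk1m : k + 1 ≤ m := le_max_left _ _
    have h0m : k₀ ≤ m := le_max_right _ _
    have hgmem : gpatch u g.1 h.1 k v ∈ Mk u m :=
      gpatch_mem u g.1 h.1 v hkm (hgm m h0m) (hhm m h0m)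
    have hhmem : h.1 ∈ Mk u m := hhm m h0m
    have hmem : ((⟨gpatch u g.1 h.1 k v, hgmem⟩ : Mk u m), (⟨h.1, hhmem⟩ : Mk u m))
        ∈ restrictCong hNL θ := by
      rw [hR']
      refine Set.mem_iInter₂.mpr fun φ hφ => ?_
      obtain ⟨x, hx⟩ := hom_eval u m φ
      show φ.1 ⟨gpatch u g.1 h.1 k v, hgmem⟩ = φ.1 ⟨h.1, hhmem⟩
      rw [hx _ hgmem, hx _ hhmem]
      have hg2 : gpatch u g.1 h.1 (k + 1) (Fin.snoc v (u k x)) ∈ Mk u m :=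
        gpatch_mem u g.1 h.1 _ hk1m (hgm m h0m) (hhm m h0m)
      have h2 : ((⟨gpatch u g.1 h.1 (k + 1) (Fin.snoc v (u k x)), hg2⟩ : Mk u m),
          (⟨h.1, hhmem⟩ : Mk u m)) ∈ restrictCong hNL θ := by
        show ((⟨gpatch u g.1 h.1 (k + 1) (Fin.snoc v (u k x)), hNL hg2⟩ : L),
          (⟨h.1, hNL hhmem⟩ : L)) ∈ θ
        exact hcon (u k x)
      rw [hR'] at h2
      have h4 : φ.1 ⟨gpatch u g.1 h.1 (k + 1) (Fin.snoc v (u k x)), hg2⟩ = φ.1 ⟨h.1, hhmem⟩ :=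
        Set.mem_iInter₂.mp h2 φ hφ
      rw [hx _ hg2, hx _ hhmem] at h4
      rw [← gpatch_snoc_eq u g.1 h.1 k v x]
      exact h4
    exact hmem
  -- build the branch
  let β : (k : ℕ) → {v : Fin k → A // ((⟨gpatch u g.1 h.1 k v, hmemL k v⟩ : L), h) ∉ θ} :=
    fun k => Nat.rec
      (motive := fun k => {v : Fin k → A // ((⟨gpatch u g.1 h.1 k v, hmemL k v⟩ : L), h) ∉ θ})
      ⟨fun j => j.elim0, base⟩
      (fun k ih => ⟨Fin.snoc ih.1 (step k ih.1 ih.2).choose, (step k ih.1 ih.2).choose_spec⟩) k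
  have hβsucc : ∀ k : ℕ,
      (β (k + 1)).1 = Fin.snoc (β k).1 ((step k (β k).1 (β k).2).choose) := fun _ => rfl
  have hcoh : ∀ (k m : ℕ) (hkm : k ≤ m) (j : Fin k), (β m).1 (Fin.castLE hkm j) = (β k).1 j := by
    intro k m hkm
    induction m, hkm using Nat.le_induction with
    | base =>
      intro j
      congr 1
    | succ m hm ih =>
      intro j
      rw [hβsucc m]
      have e : Fin.castLE (Nat.le_succ_of_le hm) j = Fin.castSucc (Fin.castLE hm j) := rfl
      rw [e, Fin.snoc_castSucc]
      exact ih j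
  -- witnesses
  have wit : ∀ m : ℕ, k₀ ≤ m → ∃ x : I,
      (∀ j : Fin m, u j x = (β m).1 j) ∧ g.1 x ≠ h.1 x ∧
      ∀ p q : L, (p, q) ∈ θ → p.1 ∈ Mk u m → q.1 ∈ Mk u m → p.1 x = q.1 x := by
    intro m hm
    have hNL : Mk u m ⊆ L := hMkL m
    obtain ⟨-, R', hR'⟩ := hθ.2 (Mk u m) hNL
      ⟨u '' Set.Iio m, (Set.finite_Iio m).image u, Mk_eq_genBy u m⟩
    have hgm2 : gpatch u g.1 h.1 m (β m).1 ∈ Mk u m :=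
      gpatch_mem u g.1 h.1 _ le_rfl (hgm m hm) (hhm m hm)
    have hhm2 : h.1 ∈ Mk u m := hhm m hm
    have hnot : ((⟨gpatch u g.1 h.1 m (β m).1, hgm2⟩ : Mk u m), (⟨h.1, hhm2⟩ : Mk u m))
        ∉ restrictCong hNL θ := by
      intro hc
      apply (β m).2
      exact hc
    rw [hR'] at hnot
    have hex : ∃ φ ∈ R', ((⟨gpatch u g.1 h.1 m (β m).1, hgm2⟩ : Mk u m),
        (⟨h.1, hhm2⟩ : Mk u m)) ∉ kerOf φ.1 := by
      by_contra hno
      push_neg at hno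
      exact hnot (Set.mem_iInter₂.mpr hno)
    obtain ⟨φ, hφR, hφne⟩ := hex
    obtain ⟨x, hx⟩ := hom_eval u m φ
    have hφne' : gpatch u g.1 h.1 m (β m).1 x ≠ h.1 x := by
      intro he
      apply hφne
      show φ.1 _ = φ.1 _
      rw [hx _ hgm2, hx _ hhm2]
      exact he
    have hcondx : ∀ j : Fin m, u j x = (β m).1 j := by
      by_contra hnc
      exact hφne' (gpatch_neg u g.1 h.1 hnc)
    refine ⟨x, hcondx, ?_, ?_⟩
    · intro he
      apply hφne'
      rw [gpatch_pos u g.1 h.1 hcondx]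
      exact he
    · intro p q hpq hpm hqm
      have hmempq : ((⟨p.1, hpm⟩ : Mk u m), (⟨q.1, hqm⟩ : Mk u m)) ∈ restrictCong hNL θ := by
        show ((⟨p.1, hNL hpm⟩ : L), (⟨q.1, hNL hqm⟩ : L)) ∈ θ
        exact hpq
      rw [hR'] at hmempq
      have h5 : φ.1 ⟨p.1, hpm⟩ = φ.1 ⟨q.1, hqm⟩ := Set.mem_iInter₂.mp hmempq φ hφR
      rwa [hx _ hpm, hx _ hqm] at h5
  -- the homomorphism
  set φ0 : L → A := fun p => fp p ((β (kp p)).1) with hφ0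
  have keyev : ∀ (p : L) (m : ℕ), kp p ≤ m → ∀ x : I,
      (∀ j : Fin m, u j x = (β m).1 j) → φ0 p = p.1 x := by
    intro p m hpm x hx
    have hvals : ∀ j : Fin (kp p), u j x = (β (kp p)).1 j := by
      intro j
      have h1 := hx (Fin.castLE hpm j)
      rw [hcoh (kp p) m hpm j] at h1
      rwa [Fin.coe_castLE] at h1
    have e : φ0 p = fp p (fun j : Fin (kp p) => u j x) := by
      show fp p _ = fp p _
      congr 1
      funext j
      exact (hvals j).symm
    rw [e]
    exact (congrFun (hfp p) x).symm
  have hhom : IsHom L φ0 := by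
    constructor
    · intro a ha
      obtain ⟨x, hx, -, -⟩ := wit (max (kp ⟨fun _ : I => a, ha⟩) k₀) (le_max_right _ _)
      exact keyev ⟨fun _ : I => a, ha⟩ _ (le_max_left _ _) x hx
    · intro n f gg hgg hcomp
      set c : L := ⟨fun x : I => f fun i => gg i x, hcomp⟩ with hc
      set m := max (max (kp c) k₀) (Finset.univ.sup fun i : Fin n => kp ⟨gg i, hgg i⟩) with hm
      obtain ⟨x, hx, -, -⟩ := wit m (le_trans (le_max_right _ _) (le_max_left _ _))
      have e1 : φ0 c = c.1 x := keyev c m (le_trans (le_max_left _ _) (le_max_left _ _)) x hx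
      have e2 : ∀ i : Fin n, φ0 ⟨gg i, hgg i⟩ = gg i x := fun i =>
        keyev _ m (le_trans (Finset.le_sup (f := fun i : Fin n => kp ⟨gg i, hgg i⟩) (Finset.mem_univ i)) (le_max_right _ _)) x hx
      rw [e1]
      show f (fun i => gg i x) = _
      congr 1
      funext i
      exact (e2 i).symm
  refine ⟨⟨φ0, hhom⟩, ?_, ?_⟩
  · rintro ⟨p, q⟩ hpq
    set m := max (max (kp p) (kp q)) k₀ with hm
    obtain ⟨x, hx, -, hker⟩ := wit m (le_max_right _ _)
    show φ0 p = φ0 q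
    rw [keyev p m (le_trans (le_max_left _ _) (le_max_left _ _)) x hx,
      keyev q m (le_trans (le_max_right _ _) (le_max_left _ _)) x hx]
    exact hker p q hpq (Mk_mono u (le_trans (le_max_left _ _) (le_max_left _ _)) ⟨fp p, hfp p⟩)
      (Mk_mono u (le_trans (le_max_right _ _) (le_max_left _ _)) ⟨fp q, hfp q⟩)
  · obtain ⟨x, hx, hne, -⟩ := wit k₀ le_rfl
    show φ0 g ≠ φ0 h
    rw [keyev g k₀ (le_max_left _ _) x hx, keyev h k₀ (le_max_right _ _) x hx]
    exact hne
/-- If the function algebra `L` is countably generated, then every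
locally partitionable congruence on `L` is partitionable. -/
theorem stmt19 {A I : Type*} [Infinite A] (L : Set (I → A)) (hL : IsFnAlg L)
    (hcg : ∃ S : Set (I → A), S.Countable ∧ L = genBy S) :
    ∀ θ : Set (L × L), IsLocPartCong L θ → IsPartCong L θ := by

  intro θ hθ
  refine ⟨hθ.1, ?_⟩
  obtain ⟨S, hSc, hLS⟩ := hcg
  have hcA : (fun _ : I => (Classical.arbitrary A)) ∈ L := hL.1 _
  have hS'c : (insert (fun _ : I => (Classical.arbitrary A)) S).Countable := hSc.insert _
  obtain ⟨u, hu⟩ := hS'c.exists_eq_range ⟨_, Set.mem_insert _ _⟩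
  have hLu : L = genBy (Set.range u) := by
    rw [← hu]
    apply subset_antisymm
    · rw [hLS]
      exact genBy_subset (isFnAlg_genBy _)
        (Set.Subset.trans (Set.subset_insert _ _) (subset_genBy _))
    · refine genBy_subset hL ?_
      intro p hp
      rcases hp with hp | hp
      · rw [hp]; exact hcA
      · rw [hLS]; exact subset_genBy S hp
  refine ⟨{φ : Zt L | θ ⊆ kerOf φ.1}, ?_⟩
  apply subset_antisymm
  · intro pr hpr
    exact Set.mem_iInter₂.mpr fun φ hφ => hφ hpr
  · intro pr hpr
    by_contra hn
    have hn' : (pr.1, pr.2) ∉ θ := by rwa [Prod.mk.eta]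
    obtain ⟨φ, hφker, hφne⟩ := key_sep u L hLu θ hθ pr.1 pr.2 hn'
    exact hφne (Set.mem_iInter₂.mp hpr φ hφker)
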